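/- Let $N>1$, $1<p<\infty$, $\rho>0$, $t\in(0,\rho)$, $0<\delta<M$, $0<k_2\delta^{p-1}\le k_1M^{p-1}$, and let $K(s,\theta)=(s/\theta)^{N-1}\omega_\rho(s)$ with $\omega_\rho\ge 0$ continuous. Suppose $\delta=\delta\int_t^\rho(k_2\int_0^t K(s,\theta)ds)^{1/(p-1)}d\theta$ (i.e. $\int_t^\rho(k_2\int_0^tK(s,\theta)ds)^{1/(p-1)}d\theta=1$). Define $\Psi_\delta(r)=\delta$ for $0\le r\le t$ and $\Psi_\delta(r)=\delta\int_r^\rho(k_2\int_0^tK(s,\theta)ds)^{1/(p-1)}d\theta$ for $t<r\le\rho$, and $\Phi_M(r)=M\int_r^\rho(k_1\int_0^\theta K(s,\theta)ds)^{1/(p-1)}d\theta$. Then $0\le\Psi_\delta(r)\le\Phi_M(r)$ for all $r\in[0,\rho]$. -/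

import Mathlib

/-!
On `[t, ρ]` the integrands compare pointwise: writing `δ (k₂ a)^{1/(p-1)} = (k₂ δ^{p-1} a)^{1/(p-1)}`
and likewise for `M`, the claim `δ (k₂ ∫₀ᵗ K)^{1/(p-1)} ≤ M (k₁ ∫₀^θ K)^{1/(p-1)}` follows from
`k₂ δ^{p-1} ≤ k₁ M^{p-1}` and `∫₀ᵗ K ≤ ∫₀^θ K` (as `K ≥ 0` and `t ≤ θ`). Integrating over `[max r t, ρ]`
gives `Ψ_δ(r) ≤ Φ_M(max r t) ≤ Φ_M(r)`, where for `r ≤ t` the normalisation turns `Ψ_δ(r) = δ` into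
`δ ∫_t^ρ (k₂ ∫₀ᵗ K)^{1/(p-1)}`. The only analytic input is the integrability of the integrand of `Φ_M`
near `θ = 0`: there `∫₀^θ K(s, θ) ds ≤ ∫₀^ρ ω` because `(s/θ)^{N-1} ≤ 1`.
-/

open MeasureTheory Set intervalIntegral

lemma mul_rpow_one_div_le_mul_rpow_one_div {q δ M k₁ k₂ a b : ℝ} (hq : 0 < q) (hδ : 0 ≤ δ)
    (hM : 0 ≤ M) (hk₁ : 0 ≤ k₁) (hk₂ : 0 ≤ k₂) (hk : k₂ * δ ^ q ≤ k₁ * M ^ q) (ha : 0 ≤ a)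
    (hab : a ≤ b) : δ * (k₂ * a) ^ (1 / q) ≤ M * (k₁ * b) ^ (1 / q) := by
  have hroot : ∀ x y : ℝ, 0 ≤ x → 0 ≤ y → x * y ^ (1 / q) = (x ^ q * y) ^ (1 / q) := by
    intro x y hx hy
    rw [Real.mul_rpow (by positivity) hy, one_div, Real.rpow_rpow_inv hx hq.ne']
  rw [hroot δ _ hδ (by positivity), hroot M _ hM (mul_nonneg hk₁ (ha.trans hab))]
  refine Real.rpow_le_rpow (by positivity) ?_ (by positivity)
  calc δ ^ q * (k₂ * a) = k₂ * δ ^ q * a := by ring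
    _ ≤ k₁ * M ^ q * b := mul_le_mul hk hab ha ((by positivity : 0 ≤ k₂ * δ ^ q).trans hk)
    _ = M ^ q * (k₁ * b) := by ring

lemma integral_le_integral_of_le_of_nonneg {f g : ℝ → ℝ} {a b c : ℝ} (hab : a ≤ b) (hbc : b ≤ c)
    (hf : IntervalIntegrable f volume b c) (hg : IntervalIntegrable g volume a c)
    (hfg : ∀ x ∈ Icc b c, f x ≤ g x) (hg₀ : ∀ x ∈ Icc a c, 0 ≤ g x) :
    ∫ x in b..c, f x ≤ ∫ x in a..c, g x :=
  (integral_mono_on hbc hf (hg.mono_set (uIcc_subset_uIcc_right (mem_uIcc_of_le hab hbc))) hfg).trans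
    (integral_mono_interval hab hbc le_rfl
      (ae_restrict_of_forall_mem measurableSet_Ioc fun x hx => hg₀ x (Ioc_subset_Icc_self hx)) hg)

section RadialKernel

variable {ω : ℝ → ℝ} {ρ n : ℝ}

lemma integral_div_rpow_mul_eq {θ x : ℝ} (hθ : 0 < θ) (hx : 0 ≤ x) :
    ∫ s in (0 : ℝ)..x, (s / θ) ^ n * ω s = (θ ^ n)⁻¹ * ∫ s in (0 : ℝ)..x, s ^ n * ω s := by
  rw [← intervalIntegral.integral_const_mul]
  refine integral_congr fun s hs => ?_
  rw [uIcc_of_le hx] at hs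
  rw [Real.div_rpow hs.1 hθ.le, div_eq_inv_mul, mul_assoc]

lemma integral_div_rpow_mul_nonneg (hωnn : ∀ s ∈ Icc 0 ρ, 0 ≤ ω s) {θ x : ℝ} (hθ : 0 ≤ θ)
    (hx : x ∈ Icc 0 ρ) : 0 ≤ ∫ s in (0 : ℝ)..x, (s / θ) ^ n * ω s :=
  integral_nonneg hx.1 fun s hs =>
    mul_nonneg (Real.rpow_nonneg (div_nonneg hs.1 hθ) _) (hωnn s ⟨hs.1, hs.2.trans hx.2⟩)

lemma integral_div_rpow_mul_mono (hn : 0 ≤ n) (hω : ContinuousOn ω (Icc 0 ρ))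
    (hωnn : ∀ s ∈ Icc 0 ρ, 0 ≤ ω s) {θ x y : ℝ} (hθ : 0 ≤ θ) (hx : 0 ≤ x) (hxy : x ≤ y)
    (hy : y ≤ ρ) :
    ∫ s in (0 : ℝ)..x, (s / θ) ^ n * ω s ≤ ∫ s in (0 : ℝ)..y, (s / θ) ^ n * ω s := by
  have hcont : ContinuousOn (fun s => (s / θ) ^ n * ω s) (Icc 0 y) :=
    ((continuous_id.div_const θ).rpow_const fun _ => Or.inr hn).continuousOn.mul
      (hω.mono (Icc_subset_Icc_right hy))
  refine integral_mono_interval le_rfl hx hxy (ae_restrict_of_forall_mem measurableSet_Ioc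
    fun s hs => ?_) (hcont.intervalIntegrable_of_Icc (hx.trans hxy))
  exact mul_nonneg (Real.rpow_nonneg (div_nonneg hs.1.le hθ) _) (hωnn s ⟨hs.1.le, hs.2.trans hy⟩)

lemma integral_div_rpow_mul_le_integral (hn : 0 ≤ n) (hω : ContinuousOn ω (Icc 0 ρ))
    (hωnn : ∀ s ∈ Icc 0 ρ, 0 ≤ ω s) {θ : ℝ} (hθ : 0 < θ) (hθρ : θ ≤ ρ) :
    ∫ s in (0 : ℝ)..θ, (s / θ) ^ n * ω s ≤ ∫ s in (0 : ℝ)..ρ, ω s := by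
  have hωθ : ContinuousOn ω (Icc 0 θ) := hω.mono (Icc_subset_Icc_right hθρ)
  calc ∫ s in (0 : ℝ)..θ, (s / θ) ^ n * ω s ≤ ∫ s in (0 : ℝ)..θ, ω s := by
        refine integral_mono_on hθ.le ?_ (hωθ.intervalIntegrable_of_Icc hθ.le) fun s hs => ?_
        · exact (((continuous_id.div_const θ).rpow_const fun _ => Or.inr hn).continuousOn.mul
            hωθ).intervalIntegrable_of_Icc hθ.le
        · exact mul_le_of_le_one_left (hωnn s ⟨hs.1, hs.2.trans hθρ⟩)
            (Real.rpow_le_one (div_nonneg hs.1 hθ.le) ((div_le_one hθ).2 hs.2) hn)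
    _ ≤ ∫ s in (0 : ℝ)..ρ, ω s :=
      integral_mono_interval le_rfl hθ.le hθρ (ae_restrict_of_forall_mem measurableSet_Ioc
        fun s hs => hωnn s (Ioc_subset_Icc_self hs)) (hω.intervalIntegrable_of_Icc (hθ.le.trans hθρ))

lemma continuousOn_integral_div_rpow_mul (hn : 0 ≤ n) (hρ : 0 ≤ ρ)
    (hω : ContinuousOn ω (Icc 0 ρ)) {S : Set ℝ} {X : ℝ → ℝ} (hX : ContinuousOn X S)
    (hXS : MapsTo X S (Icc 0 ρ)) (hS : S ⊆ Ioi 0) :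
    ContinuousOn (fun θ => ∫ s in (0 : ℝ)..X θ, (s / θ) ^ n * ω s) S := by
  have hu : ContinuousOn (fun x => ∫ s in (0 : ℝ)..x, s ^ n * ω s) (Icc 0 ρ) := by
    simpa only [uIcc_of_le hρ] using continuousOn_primitive_interval (μ := volume) (a := 0)
      (b := ρ) (f := fun s => s ^ n * ω s) (by
        rw [uIcc_of_le hρ]
        exact ((continuous_id.rpow_const fun _ => Or.inr hn).continuousOn.mul hω).integrableOn_Icc)
  refine (((continuousOn_id.rpow_const fun _ _ => Or.inr hn).inv₀ fun θ hθ =>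
    (Real.rpow_pos_of_pos (hS hθ) n).ne').mul (hu.comp hX hXS)).congr fun θ hθ => ?_
  exact integral_div_rpow_mul_eq (hS hθ) (hXS hθ).1

lemma intervalIntegrable_rpow_integral_div_rpow_mul (hn : 0 ≤ n) (hρ : 0 ≤ ρ)
    (hω : ContinuousOn ω (Icc 0 ρ)) (hωnn : ∀ s ∈ Icc 0 ρ, 0 ≤ ω s) {k c : ℝ} (hk : 0 ≤ k)
    (hc : 0 ≤ c) :
    IntervalIntegrable (fun θ => (k * ∫ s in (0 : ℝ)..θ, (s / θ) ^ n * ω s) ^ c) volume 0 ρ := by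
  rw [intervalIntegrable_iff_integrableOn_Ioc_of_le hρ]
  have hcont : ContinuousOn (fun θ => (k * ∫ s in (0 : ℝ)..θ, (s / θ) ^ n * ω s) ^ c)
      (Ioc 0 ρ) :=
    (continuousOn_const.mul (continuousOn_integral_div_rpow_mul hn hρ hω continuousOn_id
      (fun _ hθ => Ioc_subset_Icc_self hθ) fun _ hθ => hθ.1)).rpow_const fun _ _ => Or.inr hc
  refine ⟨hcont.aestronglyMeasurable measurableSet_Ioc,
    HasFiniteIntegral.restrict_of_bounded (C := (k * ∫ s in (0 : ℝ)..ρ, ω s) ^ c)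
      measure_Ioc_lt_top (ae_restrict_of_forall_mem measurableSet_Ioc fun θ hθ => ?_)⟩
  have h₀ := integral_div_rpow_mul_nonneg (n := n) hωnn hθ.1.le (Ioc_subset_Icc_self hθ)
  rw [Real.norm_of_nonneg (by positivity)]
  exact Real.rpow_le_rpow (by positivity) (mul_le_mul_of_nonneg_left
    (integral_div_rpow_mul_le_integral hn hω hωnn hθ.1 hθ.2) hk) hc

lemma mul_integral_rpow_le_mul_integral_rpow (hn : 0 ≤ n) (hω : ContinuousOn ω (Icc 0 ρ))
    (hωnn : ∀ s ∈ Icc 0 ρ, 0 ≤ ω s) {q δ M k₁ k₂ t a b : ℝ} (hq : 0 < q) (hδ : 0 ≤ δ)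
    (hM : 0 ≤ M) (hk₁ : 0 ≤ k₁) (hk₂ : 0 ≤ k₂) (hk : k₂ * δ ^ q ≤ k₁ * M ^ q) (ht : 0 < t)
    (ha : 0 ≤ a) (hab : a ≤ b) (htb : t ≤ b) (hbρ : b ≤ ρ) :
    δ * ∫ θ in b..ρ, (k₂ * ∫ s in (0 : ℝ)..t, (s / θ) ^ n * ω s) ^ (1 / q) ≤
      M * ∫ θ in a..ρ, (k₁ * ∫ s in (0 : ℝ)..θ, (s / θ) ^ n * ω s) ^ (1 / q) := by
  have hρ : 0 ≤ ρ := ha.trans (hab.trans hbρ)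
  have htρ : t ∈ Icc 0 ρ := ⟨ht.le, htb.trans hbρ⟩
  have hg : IntervalIntegrable (fun θ => (k₂ * ∫ s in (0 : ℝ)..t, (s / θ) ^ n * ω s) ^ (1 / q))
      volume b ρ :=
    ((continuousOn_const.mul (continuousOn_integral_div_rpow_mul hn hρ hω continuousOn_const
      (fun _ _ => htρ) fun _ hθ => ht.trans_le (htb.trans hθ.1))).rpow_const
      fun _ _ => Or.inr (by positivity)).intervalIntegrable_of_Icc hbρ
  have hh := intervalIntegrable_rpow_integral_div_rpow_mul hn hρ hω hωnn hk₁ (c := 1 / q)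
    (by positivity)
  rw [← intervalIntegral.integral_const_mul, ← intervalIntegral.integral_const_mul]
  refine integral_le_integral_of_le_of_nonneg hab hbρ (hg.const_mul δ)
    ((hh.mono_set (uIcc_subset_uIcc_right (mem_uIcc_of_le ha (hab.trans hbρ)))).const_mul M)
    (fun θ hθ => ?_) fun θ hθ => ?_
  · have hθ₀ : 0 ≤ θ := ht.le.trans (htb.trans hθ.1)
    exact mul_rpow_one_div_le_mul_rpow_one_div hq hδ hM hk₁ hk₂ hk
      (integral_div_rpow_mul_nonneg hωnn hθ₀ htρ)
      (integral_div_rpow_mul_mono hn hω hωnn hθ₀ ht.le (htb.trans hθ.1) hθ.2)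
  · have hθ₀ : 0 ≤ θ := ha.trans hθ.1
    exact mul_nonneg hM (Real.rpow_nonneg (mul_nonneg hk₁
      (integral_div_rpow_mul_nonneg hωnn hθ₀ ⟨hθ₀, hθ.2⟩)) _)

end RadialKernel

theorem stmt_14_general (N : ℕ) (hN : 1 < N) (p ρ t δ M k₁ k₂ : ℝ)
    (hp : 1 < p) (ht : t ∈ Set.Ioo (0 : ℝ) ρ)
    (hδ : 0 < δ) (hδM : δ < M)
    (hk₂ : 0 < k₂ * δ ^ (p - 1)) (hk : k₂ * δ ^ (p - 1) ≤ k₁ * M ^ (p - 1))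
    (ω : ℝ → ℝ) (hω : ContinuousOn ω (Set.Icc 0 ρ)) (hωnn : ∀ s ∈ Set.Icc (0 : ℝ) ρ, 0 ≤ ω s)
    (K : ℝ → ℝ → ℝ) (hK : ∀ s θ : ℝ, K s θ = (s / θ) ^ ((N : ℝ) - 1) * ω s)
    (hnorm : (∫ θ in t..ρ, (k₂ * ∫ s in (0 : ℝ)..t, K s θ) ^ (1 / (p - 1))) = 1)
    (Ψ Φ : ℝ → ℝ)
    (hΨ₁ : ∀ r : ℝ, r ≤ t → Ψ r = δ)
    (hΨ₂ : ∀ r : ℝ, t < r →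
      Ψ r = δ * ∫ θ in r..ρ, (k₂ * ∫ s in (0 : ℝ)..t, K s θ) ^ (1 / (p - 1)))
    (hΦ : ∀ r : ℝ,
      Φ r = M * ∫ θ in r..ρ, (k₁ * ∫ s in (0 : ℝ)..θ, K s θ) ^ (1 / (p - 1))) :
    ∀ r ∈ Set.Icc (0 : ℝ) ρ, 0 ≤ Ψ r ∧ Ψ r ≤ Φ r := by
  obtain rfl : K = fun s θ => (s / θ) ^ ((N : ℝ) - 1) * ω s := funext fun s => funext (hK s)
  obtain ⟨ht₀, htρ⟩ := ht
  have hn : 0 ≤ (N : ℝ) - 1 := by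
    have : (1 : ℝ) ≤ N := by exact_mod_cast hN.le
    linarith
  have hM : 0 < M := hδ.trans hδM
  have hk₂₀ : 0 < k₂ := pos_of_mul_pos_left hk₂ (by positivity)
  have hk₁₀ : 0 < k₁ := pos_of_mul_pos_left (hk₂.trans_le hk) (by positivity)
  intro r hr
  have hΨr : Ψ r = δ * ∫ θ in max r t..ρ,
      (k₂ * ∫ s in (0 : ℝ)..t, (s / θ) ^ ((N : ℝ) - 1) * ω s) ^ (1 / (p - 1)) := by
    rcases le_or_gt r t with hrt | hrt
    · rw [hΨ₁ r hrt, max_eq_right hrt, hnorm, mul_one]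
    · rw [hΨ₂ r hrt, max_eq_left hrt.le]
  have hmax : max r t ≤ ρ := max_le hr.2 htρ.le
  rw [hΨr, hΦ r]
  refine ⟨mul_nonneg hδ.le (integral_nonneg hmax fun θ hθ => ?_),
    mul_integral_rpow_le_mul_integral_rpow hn hω hωnn (by linarith) hδ.le hM.le hk₁₀.le hk₂₀.le hk
      ht₀ hr.1 (le_max_left r t) (le_max_right r t) hmax⟩
  have hθ₀ : 0 < θ := ht₀.trans_le ((le_max_right r t).trans hθ.1)
  exact Real.rpow_nonneg
    (mul_nonneg hk₂₀.le (integral_div_rpow_mul_nonneg hωnn hθ₀.le ⟨ht₀.le, htρ.le⟩)) _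

theorem stmt_14 (N : ℕ) (hN : 1 < N) (p ρ t δ M k₁ k₂ : ℝ)
    (hp : 1 < p) (hρ : 0 < ρ) (ht : t ∈ Set.Ioo (0 : ℝ) ρ)
    (hδ : 0 < δ) (hδM : δ < M)
    (hk₂ : 0 < k₂ * δ ^ (p - 1)) (hk : k₂ * δ ^ (p - 1) ≤ k₁ * M ^ (p - 1))
    (ω : ℝ → ℝ) (hω : ContinuousOn ω (Set.Icc 0 ρ)) (hωnn : ∀ s ∈ Set.Icc (0 : ℝ) ρ, 0 ≤ ω s)
    (K : ℝ → ℝ → ℝ) (hK : ∀ s θ : ℝ, K s θ = (s / θ) ^ ((N : ℝ) - 1) * ω s)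
    (hnorm : (∫ θ in t..ρ, (k₂ * ∫ s in (0 : ℝ)..t, K s θ) ^ (1 / (p - 1))) = 1)
    (Ψ Φ : ℝ → ℝ)
    (hΨ₁ : ∀ r : ℝ, r ≤ t → Ψ r = δ)
    (hΨ₂ : ∀ r : ℝ, t < r →
      Ψ r = δ * ∫ θ in r..ρ, (k₂ * ∫ s in (0 : ℝ)..t, K s θ) ^ (1 / (p - 1)))
    (hΦ : ∀ r : ℝ,
      Φ r = M * ∫ θ in r..ρ, (k₁ * ∫ s in (0 : ℝ)..θ, K s θ) ^ (1 / (p - 1))) :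
    ∀ r ∈ Set.Icc (0 : ℝ) ρ, 0 ≤ Ψ r ∧ Ψ r ≤ Φ r :=
  stmt_14_general N hN p ρ t δ M k₁ k₂ hp ht hδ hδM hk₂ hk ω hω hωnn K hK hnorm Ψ Φ hΨ₁ hΨ₂ hΦ
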